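/- On the group algebra ℂ[ℤ], the function L(m,n) = m²n + mn² (extended bilinearly to ℂℤ⊗ℂℤ) is a normalized commuting Hochschild 2-coboundary: L = ∂ψ with ψ(k) = −k³/3, and moreover σ(k) := L(k,−k) = 0 for all k ∈ ℤ, so the generated additive deformation has constant antipodes, while the deformation is nonconstant since μ_t((1)⊗(1)) = e^{t·2}·(2) ≠ (2) for t ≠ 0. -/
import Mathlib


open TensorProduct Coalgebra

variable {B : Type} [Ring B] [HopfAlgebra ℂ B]

/-- The comultiplication `Λ = (id ⊗ τ ⊗ id) ∘ (Δ ⊗ Δ)` of `B ⊗ B`. -/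
noncomputable def Lam : B ⊗[ℂ] B →ₗ[ℂ] (B ⊗[ℂ] B) ⊗[ℂ] (B ⊗[ℂ] B) :=
  (TensorProduct.tensorTensorTensorComm ℂ B B B B).toLinearMap ∘ₗ
    TensorProduct.map (comul (R := ℂ)) (comul (R := ℂ))

/-- Convolution of linear functionals w.r.t. a given comultiplication. -/
noncomputable def convWith {M : Type} [AddCommGroup M] [Module ℂ M]
    (Δ : M →ₗ[ℂ] M ⊗[ℂ] M) (φ ψ : M →ₗ[ℂ] ℂ) : M →ₗ[ℂ] ℂ :=
  LinearMap.mul' ℂ ℂ ∘ₗ TensorProduct.map φ ψ ∘ₗ Δ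

/-- Convolution powers `φ^{⋆n}` w.r.t. a comultiplication `Δ` and counit `ε`. -/
noncomputable def convPowWith {M : Type} [AddCommGroup M] [Module ℂ M]
    (Δ : M →ₗ[ℂ] M ⊗[ℂ] M) (ε : M →ₗ[ℂ] ℂ) (φ : M →ₗ[ℂ] ℂ) : ℕ → (M →ₗ[ℂ] ℂ)
  | 0 => ε
  | n + 1 => convWith Δ φ (convPowWith Δ ε φ n)

/-- The counit `δ ⊗ δ` of `B ⊗ B`. -/
noncomputable def counit2 : B ⊗[ℂ] B →ₗ[ℂ] ℂ :=
  LinearMap.mul' ℂ ℂ ∘ₗ TensorProduct.map (counit (R := ℂ)) (counit (R := ℂ))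

/-- `L ⋆ μ = (L ⊗ μ) ∘ Λ : B ⊗ B → B`. -/
noncomputable def LconvMu (L : B ⊗[ℂ] B →ₗ[ℂ] ℂ) : B ⊗[ℂ] B →ₗ[ℂ] B :=
  (TensorProduct.lid ℂ B).toLinearMap ∘ₗ TensorProduct.map L (LinearMap.mul' ℂ B) ∘ₗ Lam

/-- `μ ⋆ L = (μ ⊗ L) ∘ Λ : B ⊗ B → B`. -/
noncomputable def MuConvL (L : B ⊗[ℂ] B →ₗ[ℂ] ℂ) : B ⊗[ℂ] B →ₗ[ℂ] B :=
  (TensorProduct.rid ℂ B).toLinearMap ∘ₗ TensorProduct.map (LinearMap.mul' ℂ B) L ∘ₗ Lam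

/-- The Hochschild coboundary `∂ψ = δ ⊗ ψ − ψ∘μ + ψ ⊗ δ` of a 1-cochain `ψ`. -/
noncomputable def cob1 (ψ : B →ₗ[ℂ] ℂ) : B ⊗[ℂ] B →ₗ[ℂ] ℂ :=
  LinearMap.mul' ℂ ℂ ∘ₗ TensorProduct.map (counit (R := ℂ)) ψ
    - ψ ∘ₗ LinearMap.mul' ℂ B
    + LinearMap.mul' ℂ ℂ ∘ₗ TensorProduct.map ψ (counit (R := ℂ))

/-- Extensionality for linear maps on `B ⊗ B` along a spanning family. -/
theorem my_ext2 {M : Type} [AddCommGroup M] [Module ℂ M] (g : ℤ → B)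
    (hgspan : Submodule.span ℂ (Set.range g) = ⊤)
    (f h : B ⊗[ℂ] B →ₗ[ℂ] M)
    (H : ∀ m n : ℤ, f (g m ⊗ₜ[ℂ] g n) = h (g m ⊗ₜ[ℂ] g n)) : f = h := by
  apply TensorProduct.ext'
  intro a b
  have ha : a ∈ Submodule.span ℂ (Set.range g) := hgspan ▸ Submodule.mem_top
  have hb : b ∈ Submodule.span ℂ (Set.range g) := hgspan ▸ Submodule.mem_top
  induction ha, hb using Submodule.span_induction₂ with
  | mem_mem x y hx hy =>
    obtain ⟨m, rfl⟩ := hx; obtain ⟨n, rfl⟩ := hy; exact H m n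
  | zero_left y hy => simp
  | zero_right x hx => simp
  | add_left x y z hx hy hz h1 h2 => rw [add_tmul, map_add, map_add, h1, h2]
  | add_right x y z hx hy hz h1 h2 => rw [tmul_add, map_add, map_add, h1, h2]
  | smul_left r x y hx hy h1 => rw [← smul_tmul', map_smul, map_smul, h1]
  | smul_right r x y hx hy h1 => rw [tmul_smul, map_smul, map_smul, h1]

theorem Lam_grouplike (g : ℤ → B)
    (hgcomul : ∀ k : ℤ, comul (R := ℂ) (g k) = g k ⊗ₜ[ℂ] g k) (m n : ℤ) :
    Lam (g m ⊗ₜ[ℂ] g n) = (g m ⊗ₜ[ℂ] g n) ⊗ₜ[ℂ] (g m ⊗ₜ[ℂ] g n) := by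
  simp [Lam, hgcomul, tensorTensorTensorComm_tmul]

theorem convPow_grouplike (g : ℤ → B)
    (hgcomul : ∀ k : ℤ, comul (R := ℂ) (g k) = g k ⊗ₜ[ℂ] g k)
    (hgcounit : ∀ k : ℤ, counit (R := ℂ) (g k) = 1)
    (L : B ⊗[ℂ] B →ₗ[ℂ] ℂ) (m n : ℤ) (j : ℕ) :
    convPowWith Lam counit2 L j (g m ⊗ₜ[ℂ] g n) = (L (g m ⊗ₜ[ℂ] g n)) ^ j := by
  induction j with
  | zero => simp [convPowWith, counit2, hgcounit]
  | succ j ih =>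
    rw [convPowWith, convWith]
    simp [Lam_grouplike g hgcomul, ih, pow_succ, mul_comm]

/-- **Example on the group algebra `ℂ[ℤ]`** (presented abstractly: `B` is a Hopf algebra
with a linearly independent spanning family `g : ℤ → B` of grouplike group elements).  The
bilinear extension `L` of `L(m,n) = m²n + mn²` is a normalized commuting Hochschild
2-coboundary: `L = ∂ψ` with `ψ(k) = −k³/3`; moreover `σ(k) = L(k,−k) = 0`, so the generated
additive deformation has constant antipodes, while the deformation is nonconstant:
`μ_t((1)⊗(1)) = e^{2t}·(2) ≠ (2) = μ((1)⊗(1))` for `t ≠ 0`. -/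
theorem stmt19 (g : ℤ → B)
    (hg0 : g 0 = 1)
    (hgadd : ∀ k l : ℤ, g (k + l) = g k * g l)
    (hgcomul : ∀ k : ℤ, comul (R := ℂ) (g k) = g k ⊗ₜ[ℂ] g k)
    (hgcounit : ∀ k : ℤ, counit (R := ℂ) (g k) = 1)
    (hgantipode : ∀ k : ℤ, HopfAlgebra.antipode (R := ℂ) (g k) = g (-k))
    (hgli : LinearIndependent ℂ g)
    (hgspan : Submodule.span ℂ (Set.range g) = ⊤)
    (L : B ⊗[ℂ] B →ₗ[ℂ] ℂ)
    (hL : ∀ m n : ℤ, L (g m ⊗ₜ[ℂ] g n) = (m : ℂ) ^ 2 * n + m * (n : ℂ) ^ 2)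
    (ψ : B →ₗ[ℂ] ℂ)
    (hψ : ∀ k : ℤ, ψ (g k) = -(k : ℂ) ^ 3 / 3)
    (EL : ℝ → (B ⊗[ℂ] B →ₗ[ℂ] ℂ))
    (hEL : ∀ t x, EL t x = ∑' n : ℕ,
      ((t : ℂ) ^ n / n.factorial) * convPowWith Lam counit2 L n x)
    (μt : ℝ → (B ⊗[ℂ] B →ₗ[ℂ] B))
    (hμt : ∀ t, μt t = (TensorProduct.rid ℂ B).toLinearMap ∘ₗ
      TensorProduct.map (LinearMap.mul' ℂ B) (EL t) ∘ₗ Lam) :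
    L = cob1 ψ ∧
    L (1 ⊗ₜ[ℂ] 1) = 0 ∧
    LconvMu L = MuConvL L ∧
    (∀ k : ℤ, L (g k ⊗ₜ[ℂ] g (-k)) = 0) ∧
    (∀ t : ℝ, μt t (g 1 ⊗ₜ[ℂ] g 1) = Complex.exp ((2 * t : ℝ) : ℂ) • g 2) ∧
    (∀ t : ℝ, t ≠ 0 → μt t (g 1 ⊗ₜ[ℂ] g 1) ≠ g 1 * g 1) := by
  have key5 : ∀ t : ℝ, μt t (g 1 ⊗ₜ[ℂ] g 1) = Complex.exp ((2 * t : ℝ) : ℂ) • g 2 := by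
    intro t
    have hELval : EL t (g 1 ⊗ₜ[ℂ] g 1) = Complex.exp ((2 * t : ℝ) : ℂ) := by
      rw [hEL]
      have h2 : L (g 1 ⊗ₜ[ℂ] g 1) = 2 := by rw [hL]; norm_num
      have : ∀ n : ℕ, ((t : ℂ) ^ n / n.factorial) *
          convPowWith Lam counit2 L n (g 1 ⊗ₜ[ℂ] g 1) =
          (((2 * t : ℝ) : ℂ)) ^ n / n.factorial := by
        intro n
        rw [convPow_grouplike g hgcomul hgcounit, h2]
        push_cast
        ring
      rw [tsum_congr this, Complex.exp_eq_exp_ℂ, NormedSpace.exp_eq_tsum_div]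
    rw [hμt]
    simp only [LinearMap.coe_comp, Function.comp_apply, LinearEquiv.coe_coe]
    rw [Lam_grouplike g hgcomul]
    simp [hELval, ← hgadd]
  refine ⟨?_, ?_, ?_, ?_, key5, ?_⟩
  · apply my_ext2 g hgspan
    intro m n
    simp only [cob1, LinearMap.add_apply, LinearMap.sub_apply, LinearMap.coe_comp,
      Function.comp_apply, map_tmul, LinearMap.mul'_apply, hgcounit, hψ, ← hgadd, hL]
    push_cast
    ring
  · rw [← hg0, hL]; norm_num
  · apply my_ext2 g hgspan
    intro m n
    simp only [LconvMu, MuConvL, LinearMap.coe_comp, Function.comp_apply,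
      LinearEquiv.coe_coe, Lam_grouplike g hgcomul, map_tmul, LinearMap.mul'_apply,
      lid_tmul, rid_tmul]
  · intro k
    rw [hL]; push_cast; ring
  · intro t ht h
    rw [key5 t, ← hgadd] at h
    have hg2 : g 2 ≠ 0 := hgli.ne_zero 2
    have : (Complex.exp ((2 * t : ℝ) : ℂ) - 1) • g 2 = 0 := by
      rw [sub_smul, one_smul, h]
      norm_num
    rcases smul_eq_zero.mp this with h1 | h1
    · have : Complex.exp ((2 * t : ℝ) : ℂ) = 1 := by linear_combination h1
      rw [← Complex.ofReal_exp] at this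
      have := Complex.ofReal_inj.mp (by exact_mod_cast this)
      rw [show (1:ℝ) = Real.exp 0 by simp, Real.exp_eq_exp] at this
      have : t = 0 := by linarith
      exact absurd this ht
    · exact hg2 h1
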